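/- arXiv:1803.01518 — 2 statements merged into one kernel-verified Lean document; each statement's English description precedes it below -/
import Mathlib

section
/- Let V ∈ ℂ^{n×k} have orthonormal columns, let V_c ∈ ℂ^{n×(n-k)} be such that [V, V_c] is unitary, and let Z ∈ ℂ^{(n-k)×k}. Define Ṽ = (V + V_c Z)(I_k + Zᴴ Z)^{-1/2}. Then ‖ṼṼᴴ − VVᴴ‖₂ = ‖Z‖₂ / √(1 + ‖Z‖₂²). -/
/-!
`P = Ṽ Ṽᴴ` and `Q = V Vᴴ` are orthogonal projections, and
`(P - Q)² = P (1 - Q) P + (1 - P) Q (1 - P)` is a sum of two self-adjoint elements with zero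
product, so `‖P - Q‖ = max ‖(1 - Q) P‖ ‖(1 - P) Q‖`. Since `Vᴴ Ṽ = Ṽᴴ V = S⁻¹`, both terms equal
`√‖1 - S⁻²‖ = √‖1 - (1 + Zᴴ Z)⁻¹‖`, and for `A ≥ 0` the functional calculus gives
`‖1 - (1 + A)⁻¹‖ = ‖A‖ / (1 + ‖A‖)` because `t ↦ t / (1 + t)` is increasing on `[0, ∞)`.
-/

open scoped Matrix.Norms.L2Operator ComplexOrder MatrixOrder

section CStarAlgebra

variable {A : Type*} [CStarAlgebra A]

theorem IsStarProjection.norm_sub_eq_max {p q : A} (hp : IsStarProjection p)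
    (hq : IsStarProjection q) : ‖p - q‖ = max ‖(1 - q) * p‖ ‖(1 - p) * q‖ := by
  set x := (1 - q) * p
  set y := q * (1 - p)
  have hp' := hp.isSelfAdjoint.star_eq
  have hq' := hq.isSelfAdjoint.star_eq
  have hsq : star (p - q) * (p - q) = star x * x + star y * y :=
    calc star (p - q) * (p - q) = p * (1 - q) * p + (1 - p) * q * (1 - p) + (q * q - q) := by
          rw [star_sub, hp', hq']; noncomm_ring
      _ = p * ((1 - q) * (1 - q)) * p + (1 - p) * (q * q) * (1 - p) := by
          rw [hq.isIdempotentElem.eq, hq.one_sub.isIdempotentElem.eq, sub_self, add_zero]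
      _ = star x * x + star y * y := by
          simp only [x, y, star_mul, star_sub, star_one, hp', hq']; noncomm_ring
  have horth : star x * x * (star y * y) = 0 := by
    have : x * star y = 0 := by
      simp only [x, y, star_mul, star_sub, star_one, hp', hq']
      rw [mul_assoc, ← mul_assoc p, hp.mul_one_sub_self, zero_mul, mul_zero]
    rw [mul_assoc, ← mul_assoc x, this, zero_mul, mul_zero]
  have key : ‖p - q‖ * ‖p - q‖ = max (‖x‖ * ‖x‖) (‖y‖ * ‖y‖) := by
    rw [← CStarRing.norm_star_mul_self, hsq,
      (IsSelfAdjoint.star_mul_self x).norm_add_eq_max (IsSelfAdjoint.star_mul_self y) horth,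
      CStarRing.norm_star_mul_self, CStarRing.norm_star_mul_self]
  have hy : ‖y‖ = ‖(1 - p) * q‖ := by
    rw [← norm_star y]
    simp only [y, star_mul, star_sub, star_one, hp', hq']
  rw [← hy, ← mul_self_inj (norm_nonneg _) (le_max_of_le_left (norm_nonneg _)), key]
  rcases le_total ‖x‖ ‖y‖ with h | h
  · rw [max_eq_right h, max_eq_right (mul_self_le_mul_self (norm_nonneg _) h)]
  · rw [max_eq_left h, max_eq_left (mul_self_le_mul_self (norm_nonneg _) h)]

variable [PartialOrder A] [StarOrderedRing A]

theorem CStarAlgebra.norm_cfc_eq_of_monotoneOn [Nontrivial A] {f : ℝ → ℝ} {a : A} (ha : 0 ≤ a)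
    (hf : MonotoneOn f (Set.Ici 0)) (hf0 : 0 ≤ f 0)
    (hfc : ContinuousOn f (spectrum ℝ a) := by cfc_cont_tac) : ‖cfc f a‖ = f ‖a‖ := by
  have hfnonneg : ∀ x, 0 ≤ x → 0 ≤ f x := fun x hx =>
    hf0.trans (hf (Set.mem_Ici.2 le_rfl) hx hx)
  refine le_antisymm (norm_cfc_le (hfnonneg _ (norm_nonneg a)) fun x hx => ?_) ?_
  · have hx0 : 0 ≤ x := spectrum_nonneg_of_nonneg ha hx
    rw [Real.norm_of_nonneg (hfnonneg x hx0)]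
    exact hf hx0 (norm_nonneg a) ((le_abs_self x).trans (spectrum.norm_le_norm_of_mem hx))
  · exact (le_abs_self _).trans (norm_apply_le_norm_cfc f a (norm_mem_spectrum_of_nonneg ha))

theorem CStarAlgebra.norm_one_sub_ringInverse_one_add {a : A} (ha : 0 ≤ a) :
    ‖1 - Ring.inverse (1 + a)‖ = ‖a‖ / (1 + ‖a‖) := by
  obtain h | h := subsingleton_or_nontrivial A
  · simp [Subsingleton.elim a 0]
  have hspec : ∀ x ∈ spectrum ℝ a, 1 + x ≠ 0 := fun x hx => by
    linarith [spectrum_nonneg_of_nonneg ha hx]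
  have hcont : ContinuousOn (fun x : ℝ => 1 + x) (spectrum ℝ a) := by fun_prop
  have hinv : Ring.inverse (1 + a) = cfc (fun x : ℝ => (1 + x)⁻¹) a := by
    rw [cfc_inv (fun x : ℝ => 1 + x) a hspec, cfc_const_add (1 : ℝ) (fun x => x) a, cfc_id' ℝ a,
      map_one]
  have hcfc : 1 - Ring.inverse (1 + a) = cfc (fun x : ℝ => x / (1 + x)) a := by
    rw [hinv, ← cfc_const_one ℝ a,
      ← cfc_sub (fun _ => 1) (fun x : ℝ => (1 + x)⁻¹) a (hg := hcont.inv₀ hspec)]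
    refine cfc_congr fun x hx => ?_
    field_simp [hspec x hx]
    ring
  have hmono : MonotoneOn (fun x : ℝ => x / (1 + x)) (Set.Ici 0) := by
    intro x hx y hy hxy
    simp only [Set.mem_Ici] at hx hy
    rw [div_le_div_iff₀ (by linarith) (by linarith)]
    nlinarith
  rw [hcfc, CStarAlgebra.norm_cfc_eq_of_monotoneOn ha hmono (by simp)
    (continuousOn_id.div hcont hspec)]

end CStarAlgebra


namespace Matrix

variable {m k l p : Type*} [Fintype m]

theorem isStarProjection_mul_conjTranspose_self {R : Type*} [CommSemiring R] [StarRing R]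
    [Fintype k] [DecidableEq k] {W : Matrix m k R} (hW : Wᴴ * W = 1) : IsStarProjection (W * Wᴴ) where
  isIdempotentElem := by
    rw [IsIdempotentElem, Matrix.mul_assoc, ← Matrix.mul_assoc Wᴴ, hW, Matrix.one_mul]
  isSelfAdjoint := by
    rw [IsSelfAdjoint, star_eq_conjTranspose, conjTranspose_mul, conjTranspose_conjTranspose]

theorem conjTranspose_mul_self_add_mul {R : Type*} [CommRing R] [StarRing R] [Fintype p]
    [DecidableEq k] [DecidableEq p] {V : Matrix m k R} {Vc : Matrix m p R} (Z : Matrix p k R)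
    (hV : Vᴴ * V = 1) (hVc : Vcᴴ * Vc = 1) (hVcV : Vcᴴ * V = 0) :
    (V + Vc * Z)ᴴ * (V + Vc * Z) = 1 + Zᴴ * Z := by
  have hVVc : Vᴴ * Vc = 0 := by
    rw [← conjTranspose_conjTranspose Vc, ← conjTranspose_mul, hVcV, conjTranspose_zero]
  rw [conjTranspose_add, conjTranspose_mul, Matrix.add_mul, Matrix.mul_add, Matrix.mul_add, hV,
    ← Matrix.mul_assoc Vᴴ, hVVc, Matrix.zero_mul, add_zero, Matrix.mul_assoc Zᴴ, hVcV,
    Matrix.mul_zero, zero_add, Matrix.mul_assoc Zᴴ, ← Matrix.mul_assoc Vcᴴ, hVc, Matrix.one_mul]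

variable {𝕜 : Type*} [RCLike 𝕜] [Fintype k] [Fintype l]

theorem l2_opNorm_mul_conjTranspose_of_conjTranspose_mul_self_eq_one [DecidableEq m]
    [DecidableEq k] [DecidableEq l] {W : Matrix m k 𝕜} (hW : Wᴴ * W = 1) (B : Matrix l k 𝕜) :
    ‖B * Wᴴ‖ = ‖B‖ := by
  rw [← mul_self_inj (norm_nonneg _) (norm_nonneg _), ← l2_opNorm_conjTranspose (B * Wᴴ),
    ← l2_opNorm_conjTranspose B, ← l2_opNorm_conjTranspose_mul_self,
    ← l2_opNorm_conjTranspose_mul_self, conjTranspose_conjTranspose, conjTranspose_mul,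
    conjTranspose_conjTranspose, Matrix.mul_assoc, ← Matrix.mul_assoc Wᴴ, hW, Matrix.one_mul,
    conjTranspose_conjTranspose]

theorem l2_opNorm_one_sub_mul_conjTranspose_mul [DecidableEq m] [DecidableEq k] [DecidableEq l]
    {U : Matrix m k 𝕜} {W : Matrix m l 𝕜} (hU : Uᴴ * U = 1) (hW : Wᴴ * W = 1) :
    ‖(1 - U * Uᴴ) * (W * Wᴴ)‖ = √‖1 - (Uᴴ * W)ᴴ * (Uᴴ * W)‖ := by
  have he := (isStarProjection_mul_conjTranspose_self hU).one_sub
  have hcompress : ((1 - U * Uᴴ) * W)ᴴ * ((1 - U * Uᴴ) * W) = 1 - (Uᴴ * W)ᴴ * (Uᴴ * W) :=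
    calc ((1 - U * Uᴴ) * W)ᴴ * ((1 - U * Uᴴ) * W)
        = Wᴴ * (star (1 - U * Uᴴ) * (1 - U * Uᴴ)) * W := by
          rw [conjTranspose_mul, star_eq_conjTranspose]; simp only [Matrix.mul_assoc]
      _ = 1 - (Uᴴ * W)ᴴ * (Uᴴ * W) := by
          rw [he.isSelfAdjoint.star_eq, he.isIdempotentElem.eq, Matrix.mul_sub, Matrix.sub_mul,
            Matrix.mul_one, hW, conjTranspose_mul, conjTranspose_conjTranspose]
          simp only [Matrix.mul_assoc]
  rw [← Matrix.mul_assoc, l2_opNorm_mul_conjTranspose_of_conjTranspose_mul_self_eq_one hW,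
    ← hcompress, l2_opNorm_conjTranspose_mul_self, Real.sqrt_mul_self (norm_nonneg _)]

end Matrix

open Matrix in
theorem stmt0_general {n k p : Type*} [Fintype n] [Fintype k] [Fintype p]
    [DecidableEq n] [DecidableEq k] [DecidableEq p]
    (V : Matrix n k ℂ) (Vc : Matrix n p ℂ) (Z : Matrix p k ℂ)
    (hV : Vᴴ * V = 1) (hVc : Vcᴴ * Vc = 1) (hVcV : Vcᴴ * V = 0)
    (S : Matrix k k ℂ) (hS : S.PosDef) (hSsq : S * S = 1 + Zᴴ * Z)
    (Vt : Matrix n k ℂ) (hVt : Vt = (V + Vc * Z) * S⁻¹) :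
    ‖Vt * Vtᴴ - V * Vᴴ‖ = ‖Z‖ / Real.sqrt (1 + ‖Z‖ ^ 2) := by
  have hSdet : IsUnit S.det := (isUnit_iff_isUnit_det S).mp hS.isUnit
  have hSinvH : (S⁻¹)ᴴ = S⁻¹ := hS.1.inv
  have hVVc : Vᴴ * Vc = 0 := by
    rw [← conjTranspose_conjTranspose Vc, ← conjTranspose_mul, hVcV, conjTranspose_zero]
  have hVt_iso : Vtᴴ * Vt = 1 := by
    rw [hVt, conjTranspose_mul, hSinvH, Matrix.mul_assoc, ← Matrix.mul_assoc _ (V + Vc * Z),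
      conjTranspose_mul_self_add_mul Z hV hVc hVcV, ← hSsq,
      Matrix.mul_assoc, ← Matrix.mul_assoc S⁻¹, nonsing_inv_mul S hSdet, Matrix.one_mul,
      mul_nonsing_inv S hSdet]
  have hVVt : Vᴴ * Vt = S⁻¹ := by
    rw [hVt, ← Matrix.mul_assoc, Matrix.mul_add, hV, ← Matrix.mul_assoc, hVVc, Matrix.zero_mul,
      add_zero, Matrix.one_mul]
  have hVtV : Vtᴴ * V = S⁻¹ := by
    rw [← hSinvH, ← hVVt, conjTranspose_mul, conjTranspose_conjTranspose]
  have hZ : ‖1 - (S⁻¹)ᴴ * S⁻¹‖ = ‖Z‖ ^ 2 / (1 + ‖Z‖ ^ 2) := by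
    rw [hSinvH, ← Matrix.mul_inv_rev, hSsq, nonsing_inv_eq_ringInverse,
      CStarAlgebra.norm_one_sub_ringInverse_one_add
        (nonneg_iff_posSemidef.2 (posSemidef_conjTranspose_mul_self Z)),
      l2_opNorm_conjTranspose_mul_self, sq]
  rw [(isStarProjection_mul_conjTranspose_self hVt_iso).norm_sub_eq_max
      (isStarProjection_mul_conjTranspose_self hV),
    l2_opNorm_one_sub_mul_conjTranspose_mul hV hVt_iso, hVVt,
    l2_opNorm_one_sub_mul_conjTranspose_mul hVt_iso hV, hVtV, max_self, hZ,
    Real.sqrt_div' _ (by positivity), Real.sqrt_sq (norm_nonneg Z)]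

open Matrix in
/-- let `V` have orthonormal columns, `[V, Vc]` be unitary (so `Vcᴴ V = 0`,
`Vcᴴ Vc = I` and `V Vᴴ + Vc Vcᴴ = I`), `Z` a parameter matrix, and let `S` be the (Hermitian
positive definite) square root of `I + Zᴴ Z`. With `Ṽ = (V + Vc Z) S⁻¹` we have
`‖Ṽ Ṽᴴ - V Vᴴ‖₂ = ‖Z‖₂ / √(1 + ‖Z‖₂²)` in the spectral norm. -/
theorem stmt0 {n k p : Type*} [Fintype n] [Fintype k] [Fintype p]
    [DecidableEq n] [DecidableEq k] [DecidableEq p]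
    (V : Matrix n k ℂ) (Vc : Matrix n p ℂ) (Z : Matrix p k ℂ)
    (hV : Vᴴ * V = 1) (hVc : Vcᴴ * Vc = 1) (hVcV : Vcᴴ * V = 0)
    (hunit : V * Vᴴ + Vc * Vcᴴ = 1)
    (S : Matrix k k ℂ) (hS : S.PosDef) (hSsq : S * S = 1 + Zᴴ * Z)
    (Vt : Matrix n k ℂ) (hVt : Vt = (V + Vc * Z) * S⁻¹) :
    ‖Vt * Vtᴴ - V * Vᴴ‖ = ‖Z‖ / Real.sqrt (1 + ‖Z‖ ^ 2) :=
  stmt0_general V Vc Z hV hVc hVcV S hS hSsq Vt hVt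
end

section
/- Let g > d ≥ 0 and for δ > 0 let η*(δ) denote the smallest positive root of f_δ(η) = gη − dη√(1+η²) − (1+η²)δ (assumed to exist for all sufficiently small δ). Then η*(δ)/δ → 1/(g−d) as δ → 0⁺; consequently the first-order perturbation bound is ‖sinΘ‖ ≤ δ/(g−d) + O(δ²), justifying the condition number κ = 1/(g−d). -/
open Filter Real Set

/-- let `g > d ≥ 0` and for each `δ > 0` let `ηst δ` be the smallest positive
root of `f_δ(η) = gη - dη√(1+η²) - (1+η²)δ` (assumed to exist for all sufficiently small
`δ > 0`). Then `ηst δ / δ → 1/(g - d)` as `δ → 0⁺`. -/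
theorem stmt18 (g d : ℝ) (hd : 0 ≤ d) (hgd : d < g) (ηst : ℝ → ℝ)
    (hroot : ∀ᶠ δ in nhdsWithin 0 (Set.Ioi (0 : ℝ)),
      IsLeast {η : ℝ | 0 < η ∧
        g * η - d * η * Real.sqrt (1 + η ^ 2) - (1 + η ^ 2) * δ = 0} (ηst δ)) :
    Filter.Tendsto (fun δ => ηst δ / δ) (nhdsWithin 0 (Set.Ioi (0 : ℝ)))
      (nhds (1 / (g - d))) := by
  have hg : 0 < g - d := sub_pos.mpr hgd
  set L := nhdsWithin (0:ℝ) (Set.Ioi 0) with hL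
  set A : ℝ := (8*d + 4*(g-d)) / (g-d)^3 with hAdef
  have hA : 0 < A := by positivity
  set ε : ℝ := min 1 (1/(A+1)) with hεdef
  have hε : 0 < ε := lt_min one_pos (by positivity)
  have hmem : Set.Ioo (0:ℝ) ε ∈ L := Ioo_mem_nhdsGT_of_mem ⟨le_refl 0, hε⟩
  -- upper bound
  have hub : ∀ᶠ δ in L, ηst δ ≤ 2*δ/(g-d) := by
    filter_upwards [hroot, hmem] with δ hle hδ
    obtain ⟨hδ0, hδε⟩ := hδ
    set c : ℝ := 2*δ/(g-d) with hcdef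
    have hc : 0 < c := by positivity
    have hδ1 : δ ≤ 1 := le_of_lt (lt_of_lt_of_le hδε (min_le_left _ _))
    have hδ2 : δ * (A+1) < 1 := by
      have := lt_of_lt_of_le hδε (min_le_right _ _)
      rw [lt_div_iff₀ (by positivity)] at this
      linarith
    have hδA : δ^2 * A < 1 := by nlinarith
    set f : ℝ → ℝ := fun η => g*η - d*η*Real.sqrt (1+η^2) - (1+η^2)*δ with hfdef
    have hcont : ContinuousOn f (Set.Icc 0 c) := by
      apply Continuous.continuousOn; fun_prop
    have hf0 : f 0 < 0 := by
      show g*0 - d*0*Real.sqrt (1+(0:ℝ)^2) - (1+(0:ℝ)^2)*δ < 0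
      norm_num; linarith
    have hfc : 0 < f c := by
      have hsq : Real.sqrt (1 + c^2) ≤ 1 + c^2 := by
        nlinarith [Real.sq_sqrt (show (0:ℝ) ≤ 1+c^2 by positivity),
          Real.sqrt_nonneg (1+c^2)]
      have hce : c*(g-d) = 2*δ := by rw [hcdef]; field_simp
      have hkey : c^2*(d*c+δ) = δ^3*A := by
        rw [hcdef, hAdef]; field_simp; ring
      have hkey2 : c^2*(d*c+δ) < δ := by
        rw [hkey]
        calc δ^3*A = δ*(δ^2*A) := by ring
        _ < δ*1 := by exact (mul_lt_mul_iff_right₀ hδ0).mpr hδA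
        _ = δ := mul_one δ
      have h1 : g*c - d*c*(1+c^2) - (1+c^2)*δ ≤ f c := by
        simp only [hfdef]
        have : d*c*Real.sqrt (1+c^2) ≤ d*c*(1+c^2) := by
          apply mul_le_mul_of_nonneg_left hsq (by positivity)
        linarith
      nlinarith
    have : (0:ℝ) ∈ Set.Ioo (f 0) (f c) := ⟨hf0, hfc⟩
    have hiv := intermediate_value_Ioo hc.le hcont this
    obtain ⟨x, hx, hfx⟩ := hiv
    have hxmem : x ∈ {η : ℝ | 0 < η ∧
        g * η - d * η * Real.sqrt (1 + η ^ 2) - (1 + η ^ 2) * δ = 0} :=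
      ⟨hx.1, hfx⟩
    exact le_trans (hle.2 hxmem) hx.2.le
  -- positivity of ηst eventually
  have hpos : ∀ᶠ δ in L, 0 < ηst δ := by
    filter_upwards [hroot] with δ hle; exact hle.1.1
  -- ηst → 0
  have hlim2 : Filter.Tendsto (fun δ : ℝ => 2*δ/(g-d)) L (nhds 0) := by
    have : Filter.Tendsto (fun δ : ℝ => 2*δ/(g-d)) (nhds 0) (nhds (2*0/(g-d))) := by
      apply Filter.Tendsto.div_const
      exact (continuous_const.mul continuous_id).tendsto 0
    simpa using this.mono_left nhdsWithin_le_nhds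
  have htend0 : Filter.Tendsto ηst L (nhds 0) :=
    squeeze_zero' (hpos.mono fun δ h => h.le) hub hlim2
  -- continuity of F
  set F : ℝ → ℝ := fun x => (1+x^2)/(g - d*Real.sqrt (1+x^2)) with hFdef
  have hF0 : F 0 = 1/(g-d) := by
    simp [hFdef, Real.sqrt_one]
  have hFc : ContinuousAt F 0 := by
    apply ContinuousAt.div
    · fun_prop
    · fun_prop
    · simp [Real.sqrt_one]; linarith
  have hcomp : Filter.Tendsto (fun δ => F (ηst δ)) L (nhds (1/(g-d))) := by
    rw [← hF0]; exact hFc.tendsto.comp htend0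
  refine hcomp.congr' ?_
  filter_upwards [hroot, self_mem_nhdsWithin] with δ hle (hδ0 : 0 < δ)
  obtain ⟨⟨hη, heq⟩, _⟩ := hle
  set η := ηst δ
  have hsq1 : (1:ℝ) ≤ Real.sqrt (1+η^2) := by
    nlinarith [Real.sq_sqrt (show (0:ℝ) ≤ 1+η^2 by positivity),
      Real.sqrt_nonneg (1+η^2)]
  have hden : 0 < g - d*Real.sqrt (1+η^2) := by
    have h1 : η * (g - d*Real.sqrt (1+η^2)) = (1+η^2)*δ := by ring_nf; ring_nf at heq; linarith
    have h2 : 0 < (1+η^2)*δ := by positivity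
    nlinarith
  show F η = η / δ
  rw [hFdef]
  rw [eq_div_iff (ne_of_gt hδ0)]
  rw [div_mul_eq_mul_div, div_eq_iff (ne_of_gt hden)]
  nlinarith [heq]
end
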